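/- arXiv:2107.10177 — 4 statements merged into one kernel-verified Lean document; each statement's English description precedes it below -/
import Mathlib

section
/- Let χ_f > 0, Δ > 0, set λ = χ_f + 1/Δ, and let L be the 2×2 real matrix with rows (−χ_f, χ_f) and (1/Δ, −1/Δ). Then for every Δt ∈ ℝ, the matrix exponential exp(Δt·L) equals (1/(1 + χ_f·Δ)) times the 2×2 matrix with rows (1 + χ_f·Δ·e^{−λ·Δt}, χ_f·Δ·(1 − e^{−λ·Δt})) and (1 − e^{−λ·Δt}, χ_f·Δ + e^{−λ·Δt}). -/
/-!
`L` has trace `-λ` and determinant `0`, so by Cayley–Hamilton `L * L = -λ • L`. Hence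
`P = -λ⁻¹ • L` is idempotent, `P ^ n = P` for `n ≥ 1`, and summing the exponential series
termwise gives `exp (s • P) = 1 + (exp s - 1) • P`; with `s = -λ Δt` this is the claimed matrix.
-/

open Matrix

open NormedSpace Nat

section

variable {𝕂 𝔸 : Type*} [RCLike 𝕂] [NormedRing 𝔸] [NormedAlgebra 𝕂 𝔸] [CompleteSpace 𝔸]

theorem IsIdempotentElem.exp_smul {P : 𝔸} (hP : IsIdempotentElem P) (s : 𝕂) :
    exp (s • P) = 1 + (exp s - 1) • P := by
  have hterm (n : ℕ) : (n !⁻¹ : 𝕂) • (s • P) ^ n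
      = ((n !⁻¹ : 𝕂) • s ^ n) • P + if n = 0 then 1 - P else 0 := by
    rcases n with _ | n
    · simp
    · rw [smul_pow, hP.pow_succ_eq, smul_smul, smul_eq_mul, if_neg n.succ_ne_zero, add_zero]
  have hsum := ((exp_series_hasSum_exp' (𝕂 := 𝕂) s).smul_const P).add (hasSum_ite_eq 0 (1 - P))
  rw [← funext hterm] at hsum
  rw [(exp_series_hasSum_exp' (𝕂 := 𝕂) (s • P)).unique hsum, sub_smul, one_smul]
  abel

theorem exp_smul_of_mul_self_eq_smul {A : 𝔸} {c : 𝕂} (hA : A * A = c • A) (hc : c ≠ 0) (t : 𝕂) :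
    exp (t • A) = 1 + ((exp (c * t) - 1) / c) • A := by
  have hP : IsIdempotentElem (c⁻¹ • A) := by
    rw [IsIdempotentElem, smul_mul_smul_comm, hA, smul_smul, mul_assoc, inv_mul_cancel₀ hc,
      mul_one]
  have htA : t • A = (c * t) • (c⁻¹ • A) := by
    rw [smul_smul, mul_right_comm, mul_inv_cancel₀ hc, one_mul]
  rw [htA, hP.exp_smul, smul_smul, div_eq_mul_inv]

end

noncomputable def sfdOperator (χf Δ : ℝ) : Matrix (Fin 2) (Fin 2) ℝ :=
  !![-χf, χf; 1 / Δ, -1 / Δ]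

theorem sfdOperator_mul_self (χf Δ : ℝ) :
    sfdOperator χf Δ * sfdOperator χf Δ = -(χf + 1 / Δ) • sfdOperator χf Δ := by
  rw [sfdOperator, mul_fin_two]
  ext i j
  fin_cases i <;> fin_cases j <;> simp <;> ring

/-- The matrix exponential of the SFD subsystem operator `L = [[-χ_f, χ_f], [1/Δ, -1/Δ]]`
over a time step `Δt`:
`exp(Δt L) = (1/(1+χ_f Δ)) [[1 + χ_f Δ e^{-λΔt}, χ_f Δ (1 - e^{-λΔt})],
[1 - e^{-λΔt}, χ_f Δ + e^{-λΔt}]]` where `λ = χ_f + 1/Δ`. -/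
theorem sfd_matrix_exponential (χf Δ : ℝ) (hχ : 0 < χf) (hΔ : 0 < Δ) (Δt : ℝ) :
    NormedSpace.exp (Δt • (!![-χf, χf; 1 / Δ, -1 / Δ] : Matrix (Fin 2) (Fin 2) ℝ))
      = (1 / (1 + χf * Δ)) •
        !![1 + χf * Δ * Real.exp (-(χf + 1 / Δ) * Δt),
            χf * Δ * (1 - Real.exp (-(χf + 1 / Δ) * Δt));
          1 - Real.exp (-(χf + 1 / Δ) * Δt),
            χf * Δ + Real.exp (-(χf + 1 / Δ) * Δt)] := by
  let : NormedRing (Matrix (Fin 2) (Fin 2) ℝ) := Matrix.linftyOpNormedRing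
  let : NormedAlgebra ℝ (Matrix (Fin 2) (Fin 2) ℝ) := Matrix.linftyOpNormedAlgebra
  have hrate : χf + 1 / Δ ≠ 0 := by positivity
  have hden : 1 + χf * Δ ≠ 0 := by positivity
  refine (exp_smul_of_mul_self_eq_smul (sfdOperator_mul_self χf Δ) (neg_ne_zero.mpr hrate)
    Δt).trans ?_
  rw [← Real.exp_eq_exp_ℝ]
  generalize Real.exp (-(χf + 1 / Δ) * Δt) = e
  have hcoeff : (e - 1) / -(χf + 1 / Δ) = Δ * (1 - e) / (1 + χf * Δ) := by
    field_simp
    ring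
  rw [hcoeff]
  ext i j
  fin_cases i <;> fin_cases j <;> simp [sfdOperator] <;> field_simp <;> ring
end

section
/- Let χ_f > 0 and Δ > 0, and let q, q̄ : ℝ → ℝ be differentiable functions satisfying the SFD subsystem q′(t) = −χ_f(q(t) − q̄(t)) and q̄′(t) = (q(t) − q̄(t))/Δ for all t. Then both q(t) and q̄(t) converge, as t → ∞, to the common limit (q(0) + χ_f·Δ·q̄(0))/(1 + χ_f·Δ). -/
/-!
The gap `q - q̄` obeys `(q - q̄)' = -(χ_f + 1/Δ) (q - q̄)`, so it decays exponentially, while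
`q + χ_f Δ q̄` has zero derivative and is conserved. Since `1 + χ_f Δ ≠ 0`, these two quantities
determine `q` and `q̄`, and both tend to the conserved value divided by `1 + χ_f Δ`.
-/

open Filter Topology Real

section LinearODE

variable {E : Type*} [NormedAddCommGroup E] [NormedSpace ℝ E]

theorem eq_of_forall_hasDerivAt_zero {f : ℝ → E} (hf : ∀ t, HasDerivAt f 0 t) (t : ℝ) :
    f t = f 0 :=
  is_const_of_deriv_eq_zero (fun x => (hf x).differentiableAt) (fun x => (hf x).deriv) t 0

theorem eq_exp_smul_of_hasDerivAt_smul_self {y : ℝ → E} {c : ℝ}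
    (hy : ∀ t, HasDerivAt y (c • y t) t) (t : ℝ) : y t = exp (c * t) • y 0 := by
  have hexp : ∀ t : ℝ, HasDerivAt (fun t => exp (-c * t)) (-c * exp (-c * t)) t := fun t => by
    simpa [mul_comm] using ((hasDerivAt_id t).const_mul (-c)).exp
  have hderiv : ∀ t, HasDerivAt (fun t => exp (-c * t) • y t) 0 t := fun t =>
    ((hexp t).smul (hy t)).congr_deriv <| by
      rw [smul_smul, ← add_smul, smul_eq_zero]; left; ring
  have hconst := eq_of_forall_hasDerivAt_zero hderiv t
  simp only [mul_zero, exp_zero, one_smul] at hconst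
  rw [← hconst, smul_smul, ← exp_add, show c * t + -c * t = 0 by ring, exp_zero, one_smul]

theorem tendsto_zero_of_hasDerivAt_smul_self {y : ℝ → E} {c : ℝ} (hc : c < 0)
    (hy : ∀ t, HasDerivAt y (c • y t) t) : Tendsto y atTop (𝓝 0) := by
  have hexp : Tendsto (fun t => exp (c * t)) atTop (𝓝 0) :=
    tendsto_exp_atBot.comp (tendsto_id.const_mul_atTop_of_neg hc)
  simpa only [zero_smul, ← eq_exp_smul_of_hasDerivAt_smul_self hy] using hexp.smul_const (y 0)

end LinearODE

theorem tendsto_of_add_mul_eq_of_tendsto_sub {α : Type*} {l : Filter α} {q p : α → ℝ} {k S : ℝ}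
    (hk : 1 + k ≠ 0) (hS : ∀ t, q t + k * p t = S) (hd : Tendsto (fun t => q t - p t) l (𝓝 0)) :
    Tendsto q l (𝓝 (S / (1 + k))) ∧ Tendsto p l (𝓝 (S / (1 + k))) := by
  have hq : ∀ t, q t = S / (1 + k) + k / (1 + k) * (q t - p t) := fun t => by
    rw [← hS t]; field_simp; ring
  have hp : ∀ t, p t = S / (1 + k) - (1 + k)⁻¹ * (q t - p t) := fun t => by
    rw [← hS t]; field_simp; ring
  constructor
  · simpa [← funext hq] using (hd.const_mul (k / (1 + k))).const_add (S / (1 + k))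
  · simpa [← funext hp] using (hd.const_mul (1 + k)⁻¹).const_sub (S / (1 + k))

/-- Solutions of the SFD subsystem `q' = -χ_f (q - q̄)`, `q̄' = (q - q̄)/Δ` converge,
as `t → ∞`, to the common limit `(q(0) + χ_f Δ q̄(0))/(1 + χ_f Δ)`. -/
theorem sfd_common_limit (χf Δ : ℝ) (hχ : 0 < χf) (hΔ : 0 < Δ)
    (q qbar : ℝ → ℝ)
    (hq : ∀ t : ℝ, HasDerivAt q (-χf * (q t - qbar t)) t)
    (hqbar : ∀ t : ℝ, HasDerivAt qbar ((q t - qbar t) / Δ) t) :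
    Tendsto q atTop (𝓝 ((q 0 + χf * Δ * qbar 0) / (1 + χf * Δ))) ∧
    Tendsto qbar atTop (𝓝 ((q 0 + χf * Δ * qbar 0) / (1 + χf * Δ))) := by
  have hconserved : ∀ t, q t + χf * Δ * qbar t = q 0 + χf * Δ * qbar 0 :=
    eq_of_forall_hasDerivAt_zero fun t =>
      ((hq t).add ((hqbar t).const_mul (χf * Δ))).congr_deriv (by field_simp; ring)
  have hgap : ∀ t, HasDerivAt (fun t => q t - qbar t) (-(χf + Δ⁻¹) • (q t - qbar t)) t :=
    fun t => ((hq t).sub (hqbar t)).congr_deriv (by rw [smul_eq_mul]; field_simp; ring)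
  exact tendsto_of_add_mul_eq_of_tendsto_sub (by positivity) hconserved
    (tendsto_zero_of_hasDerivAt_smul_self (neg_neg_of_pos (by positivity)) hgap)
end

section
/- Let η > 0, χ_f > 0, Δ > 0 and u_s ∈ ℝ, and let q, q̄ : ℝ → ℝ be differentiable functions satisfying the combined volume-penalization/SFD system q′(t) = −(1/η)(q(t) − u_s) − χ_f(q(t) − q̄(t)), q̄′(t) = (q(t) − q̄(t))/Δ for all t. Then q(t) → u_s and q̄(t) → u_s as t → ∞; that is, unlike the SFD subsystem alone, the combined method drives the velocity inside the solid to the imposed boundary value u_s. -/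
open Filter Topology

/-! With `x = q - u_s` and `y = q̄ - u_s`, the energy `E = x² + χ_f Δ y²` (the weight makes the
two coupling terms combine) satisfies `E' = -(2/η) x² - 2 χ_f (x - y)²`. Thanks to the
penalization term this form is negative definite, so `E' ≤ -κ E` with
`κ = (2/η) / (1 + 2Δ(1/η + χ_f))`; hence `E ≤ E(0) e^{-κt} → 0`, and `x`, `y` go to `0` with it. -/

lemma tendsto_zero_of_hasDerivAt_le_neg_mul {V V' : ℝ → ℝ} {κ : ℝ}
    (hV : ∀ t, HasDerivAt V (V' t) t) (hdecay : ∀ t, V' t ≤ -κ * V t) (hV₀ : ∀ t, 0 ≤ V t)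
    (hκ : 0 < κ) : Tendsto V atTop (𝓝 0) := by
  have hanti : Antitone fun t => V t * Real.exp (κ * t) := by
    refine antitone_of_hasDerivAt_nonpos (f' := fun t => (V' t + κ * V t) * Real.exp (κ * t))
      (fun t => ?_) fun t => ?_
    · exact ((hV t).mul ((hasDerivAt_id' t).const_mul κ).exp).congr_deriv (by ring)
    · exact mul_nonpos_of_nonpos_of_nonneg (by linarith [hdecay t]) (Real.exp_pos _).le
  have hbound : ∀ t ≥ 0, V t ≤ V 0 * Real.exp (-κ * t) := fun t ht => by
    have h := hanti ht
    simp only [mul_zero, Real.exp_zero, mul_one] at h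
    rwa [neg_mul, Real.exp_neg, le_mul_inv_iff₀ (Real.exp_pos _)]
  have hexp : Tendsto (fun t => V 0 * Real.exp (-κ * t)) atTop (𝓝 0) := by
    simpa using (Real.tendsto_exp_atBot.comp
      ((tendsto_const_mul_atBot_of_neg (neg_neg_of_pos hκ)).2 tendsto_id)).const_mul (V 0)
  exact tendsto_of_tendsto_of_tendsto_of_le_of_le' tendsto_const_nhds hexp
    (Eventually.of_forall hV₀) (eventually_ge_atTop 0 |>.mono hbound)

lemma tendsto_zero_of_mul_sq_le {α : Type*} {l : Filter α} {f E : α → ℝ} {c : ℝ}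
    (hE : Tendsto E l (𝓝 0)) (hle : ∀ t, c * f t ^ 2 ≤ E t) (hc : 0 < c) :
    Tendsto f l (𝓝 0) := by
  rw [tendsto_zero_iff_abs_tendsto_zero]
  have hsqrt : Tendsto (fun t => √(E t / c)) l (𝓝 0) := by
    simpa using (hE.div_const c).sqrt
  refine squeeze_zero (fun t => abs_nonneg _) (fun t => ?_) hsqrt
  rw [Function.comp_apply, ← Real.sqrt_sq_eq_abs]
  exact Real.sqrt_le_sqrt ((le_div_iff₀' hc).2 (hle t))

def sfdEnergy (χ Δ x y : ℝ) : ℝ :=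
  x ^ 2 + χ * Δ * y ^ 2

lemma dissipation_le_neg_mul_sfdEnergy {a χ Δ : ℝ} (ha : 0 < a) (hχ : 0 < χ) (hΔ : 0 < Δ)
    (x y : ℝ) :
    -2 * a * x ^ 2 - 2 * χ * (x - y) ^ 2 ≤
      -(2 * a / (1 + 2 * Δ * (a + χ))) * sfdEnergy χ Δ x y := by
  have hgap : 0 ≤ 4 * a ^ 2 * Δ * x ^ 2 + 2 * χ * (1 + 2 * χ * Δ) * (x - y) ^ 2 +
      2 * a * χ * Δ * (2 * x - y) ^ 2 := by positivity
  have hκ : 2 * a / (1 + 2 * Δ * (a + χ)) * sfdEnergy χ Δ x y ≤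
      2 * a * x ^ 2 + 2 * χ * (x - y) ^ 2 := by
    rw [div_mul_eq_mul_div, div_le_iff₀' (by positivity), sfdEnergy]
    linear_combination hgap
  linarith

lemma hasDerivAt_sfdEnergy {η χf Δ u_s : ℝ} (hΔ : 0 < Δ) {q qbar : ℝ → ℝ}
    (hq : ∀ t : ℝ, HasDerivAt q (-(1 / η) * (q t - u_s) - χf * (q t - qbar t)) t)
    (hqbar : ∀ t : ℝ, HasDerivAt qbar ((q t - qbar t) / Δ) t) (t : ℝ) :
    HasDerivAt (fun t => sfdEnergy χf Δ (q t - u_s) (qbar t - u_s))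
      (-2 * (1 / η) * (q t - u_s) ^ 2 - 2 * χf * ((q t - u_s) - (qbar t - u_s)) ^ 2) t := by
  refine ((((hq t).sub_const u_s).pow 2).add
    ((((hqbar t).sub_const u_s).pow 2).const_mul (χf * Δ))).congr_deriv ?_
  field_simp
  ring

/-- Solutions of the combined volume-penalization/SFD system
`q' = -(1/η)(q - u_s) - χ_f (q - q̄)`, `q̄' = (q - q̄)/Δ` drive the velocity inside
the solid to the imposed boundary value: `q(t) → u_s` and `q̄(t) → u_s` as `t → ∞`. -/
theorem combined_penalization_sfd_convergence (η χf Δ u_s : ℝ)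
    (hη : 0 < η) (hχ : 0 < χf) (hΔ : 0 < Δ)
    (q qbar : ℝ → ℝ)
    (hq : ∀ t : ℝ, HasDerivAt q (-(1 / η) * (q t - u_s) - χf * (q t - qbar t)) t)
    (hqbar : ∀ t : ℝ, HasDerivAt qbar ((q t - qbar t) / Δ) t) :
    Tendsto q atTop (𝓝 u_s) ∧ Tendsto qbar atTop (𝓝 u_s) := by
  have hE : Tendsto (fun t => sfdEnergy χf Δ (q t - u_s) (qbar t - u_s)) atTop (𝓝 0) :=
    tendsto_zero_of_hasDerivAt_le_neg_mul (hasDerivAt_sfdEnergy hΔ hq hqbar)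
      (fun t => dissipation_le_neg_mul_sfdEnergy (a := 1 / η) (by positivity) hχ hΔ _ _)
      (fun t => by rw [sfdEnergy]; positivity) (by positivity)
  have hx : Tendsto (fun t => q t - u_s) atTop (𝓝 0) :=
    tendsto_zero_of_mul_sq_le hE (c := 1)
      (fun t => by rw [one_mul, sfdEnergy]; exact le_add_of_nonneg_right (by positivity)) one_pos
  have hy : Tendsto (fun t => qbar t - u_s) atTop (𝓝 0) :=
    tendsto_zero_of_mul_sq_le hE
      (fun t => by rw [sfdEnergy]; exact le_add_of_nonneg_left (by positivity)) (by positivity)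
  exact ⟨by simpa using hx.add_const u_s, by simpa using hy.add_const u_s⟩
end

section
/- Let c ∈ ℝ, χ_f > 0, Δ > 0, and let χ : ℝ → ℝ be measurable with 0 ≤ χ(x) ≤ 1 for all x. Let u, ū : ℝ × ℝ → ℝ be continuously differentiable, 2-periodic in x, and satisfy the SFD-augmented advection system ∂u/∂t + c·∂u/∂x = −χ(x)·χ_f·(u − ū) and ∂ū/∂t = χ(x)·(u − ū)/Δ at every point. Then the functional E(t) = ∫_{−1}^{1} [u(x, t)² + χ_f·Δ·ū(x, t)²] dx is a nonincreasing function of t; that is, the SFD forcing acts as a dissipation mechanism for the periodic advection problem, damping the oscillations inside the solid region. -/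
/-!
Multiplying the two equations by `2u` and `2 χ_f Δ ū` and adding gives the local energy balance
`∂ₜ(u² + χ_f Δ ū²) = -c ∂ₓ(u²) - 2 χ_f χ (u - ū)²`. Integrated over one period, the flux term
`∂ₓ(u²)` vanishes and the remaining term is nonpositive because `χ ≥ 0`; differentiating `E`
under the integral sign is legitimate since the integrands are `C¹` in `(x, t)`.
-/

open MeasureTheory

theorem hasDerivAt_intervalIntegral_of_continuous_deriv {E : Type*} [NormedAddCommGroup E]
    [NormedSpace ℝ E] {F F' : ℝ → ℝ → E} {a b t₀ : ℝ}
    (hF : ∀ t, Continuous fun x => F x t) (hF' : Continuous (Function.uncurry F'))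
    (hderiv : ∀ x t, HasDerivAt (F x) (F' x t) t) :
    HasDerivAt (fun t => ∫ x in a..b, F x t) (∫ x in a..b, F' x t₀) t₀ := by
  obtain ⟨C, hC⟩ := (isCompact_uIcc (a := a) (b := b)).prod
    (isCompact_Icc (a := t₀ - 1) (b := t₀ + 1)) |>.exists_bound_of_continuousOn hF'.continuousOn
  refine (intervalIntegral.hasDerivAt_integral_of_dominated_loc_of_deriv_le (bound := fun _ => C)
    (Icc_mem_nhds (by linarith) (by linarith)) (.of_forall fun t => (hF t).aestronglyMeasurable)
    ((hF t₀).intervalIntegrable a b)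
    (hF'.comp (Continuous.prodMk_left t₀)).aestronglyMeasurable
    (ae_of_all _ fun x hx t ht => hC (x, t) ⟨Set.uIoc_subset_uIcc hx, ht⟩)
    intervalIntegrable_const (ae_of_all _ fun x _ t _ => hderiv x t)).2

theorem DifferentiableAt.hasDerivAt_fst {E : Type*} [NormedAddCommGroup E] [NormedSpace ℝ E]
    {f : ℝ × ℝ → E} {x t : ℝ} (hf : DifferentiableAt ℝ f (x, t)) :
    HasDerivAt (fun x' => f (x', t)) (fderiv ℝ f (x, t) (1, 0)) x :=
  hf.hasFDerivAt.comp_hasDerivAt x ((hasDerivAt_id x).prodMk (hasDerivAt_const x t))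

theorem DifferentiableAt.hasDerivAt_snd {E : Type*} [NormedAddCommGroup E] [NormedSpace ℝ E]
    {f : ℝ × ℝ → E} {x t : ℝ} (hf : DifferentiableAt ℝ f (x, t)) :
    HasDerivAt (fun t' => f (x, t')) (fderiv ℝ f (x, t) (0, 1)) t :=
  hf.hasFDerivAt.comp_hasDerivAt t ((hasDerivAt_const t x).prodMk (hasDerivAt_id t))

theorem sfd_energy_density_rate_le {c χf Δ χ u ū ut ux ūt : ℝ} (hχf : 0 ≤ χf) (hΔ : Δ ≠ 0)
    (hχ : 0 ≤ χ) (hpde : ut + c * ux = -χ * χf * (u - ū)) (hpdebar : ūt = χ * (u - ū) / Δ) :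
    2 * u * ut + χf * Δ * (2 * ū * ūt) ≤ -c * (2 * u * ux) := by
  have hdiss : 2 * u * ut + χf * Δ * (2 * ū * ūt)
      = -c * (2 * u * ux) - 2 * χf * χ * (u - ū) ^ 2 := by
    rw [hpdebar, eq_sub_of_add_eq hpde]
    field_simp
    ring
  rw [hdiss]
  have : 0 ≤ χf * χ * (u - ū) ^ 2 := by positivity
  linarith

theorem sfd_energy_antitone {c χf Δ a b : ℝ} {χ : ℝ → ℝ} {u ū ut ux ūt : ℝ → ℝ → ℝ}
    (hχf : 0 ≤ χf) (hΔ : Δ ≠ 0) (hχ : ∀ x, 0 ≤ χ x) (hab : a ≤ b)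
    (hu : Continuous (Function.uncurry u)) (hū : Continuous (Function.uncurry ū))
    (hut : Continuous (Function.uncurry ut)) (hūt : Continuous (Function.uncurry ūt))
    (hux : ∀ t, Continuous fun x => ux x t)
    (hu_t : ∀ x t, HasDerivAt (u x) (ut x t) t) (hu_x : ∀ x t, HasDerivAt (u · t) (ux x t) x)
    (hū_t : ∀ x t, HasDerivAt (ū x) (ūt x t) t) (hper : ∀ t, u a t = u b t)
    (hpde : ∀ x t, ut x t + c * ux x t = -χ x * χf * (u x t - ū x t))
    (hpdebar : ∀ x t, ūt x t = χ x * (u x t - ū x t) / Δ) :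
    Antitone fun t => ∫ x in a..b, u x t ^ 2 + χf * Δ * ū x t ^ 2 := by
  have hslice {f : ℝ → ℝ → ℝ} (hf : Continuous (Function.uncurry f)) (t : ℝ) :
      Continuous fun x => f x t :=
    hf.comp (Continuous.prodMk_left t)
  have hrate t := hasDerivAt_intervalIntegral_of_continuous_deriv (a := a) (b := b) (t₀ := t)
    (F' := fun x t => 2 * u x t * ut x t + χf * Δ * (2 * ū x t * ūt x t))
    (fun t => ((hslice hu t).pow 2).add (continuous_const.mul ((hslice hū t).pow 2)))
    (by fun_prop)
    fun x t => by
      simpa using ((hu_t x t).fun_pow 2).fun_add (((hū_t x t).fun_pow 2).const_mul (χf * Δ))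
  refine antitone_of_hasDerivAt_nonpos hrate fun t => ?_
  have := hslice hu t
  have := hslice hū t
  have := hslice hut t
  have := hslice hūt t
  have := hux t
  have hflux : ∀ x ∈ Set.uIcc a b, HasDerivAt (u · t ^ 2) (2 * u x t * ux x t) x := fun x _ => by
    simpa [mul_comm] using (hu_x x t).fun_pow 2
  calc ∫ x in a..b, 2 * u x t * ut x t + χf * Δ * (2 * ū x t * ūt x t)
      ≤ ∫ x in a..b, -c * (2 * u x t * ux x t) :=
        intervalIntegral.integral_mono_on hab (Continuous.intervalIntegrable (by fun_prop) _ _)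
          (Continuous.intervalIntegrable (by fun_prop) _ _)
          fun x _ => sfd_energy_density_rate_le hχf hΔ (hχ x) (hpde x t) (hpdebar x t)
    _ = 0 := by
      rw [intervalIntegral.integral_const_mul, intervalIntegral.integral_eq_sub_of_hasDerivAt hflux
        (Continuous.intervalIntegrable (by fun_prop) _ _), hper, sub_self, mul_zero]

theorem sfd_advection_energy_decay_general (c χf Δ : ℝ) (hχf : 0 < χf) (hΔ : 0 < Δ)
    (χ : ℝ → ℝ) (hχ : ∀ x : ℝ, 0 ≤ χ x ∧ χ x ≤ 1)
    (u ubar : ℝ → ℝ → ℝ)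
    (hureg : ContDiff ℝ 1 (fun p : ℝ × ℝ => u p.1 p.2))
    (hubarreg : ContDiff ℝ 1 (fun p : ℝ × ℝ => ubar p.1 p.2))
    (huper : ∀ x t : ℝ, u (x + 2) t = u x t)
    (hpde : ∀ x t : ℝ,
      deriv (fun t' : ℝ => u x t') t + c * deriv (fun x' : ℝ => u x' t) x
        = -χ x * χf * (u x t - ubar x t))
    (hpdebar : ∀ x t : ℝ,
      deriv (fun t' : ℝ => ubar x t') t = χ x * (u x t - ubar x t) / Δ) :
    Antitone (fun t : ℝ =>
      ∫ x in (-1 : ℝ)..1, ((u x t) ^ 2 + χf * Δ * (ubar x t) ^ 2)) := by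
  set Du := fderiv ℝ (fun p : ℝ × ℝ => u p.1 p.2)
  set Dū := fderiv ℝ (fun p : ℝ × ℝ => ubar p.1 p.2)
  have hu_t x t := (hureg.differentiable one_ne_zero (x, t)).hasDerivAt_snd
  have hu_x x t := (hureg.differentiable one_ne_zero (x, t)).hasDerivAt_fst
  have hū_t x t := (hubarreg.differentiable one_ne_zero (x, t)).hasDerivAt_snd
  refine sfd_energy_antitone (c := c) (ut := fun x t => Du (x, t) (0, 1))
    (ux := fun x t => Du (x, t) (1, 0)) (ūt := fun x t => Dū (x, t) (0, 1))
    hχf.le hΔ.ne' (fun x => (hχ x).1) (by norm_num) hureg.continuous hubarreg.continuous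
    (by fun_prop) (by fun_prop) (fun t => by fun_prop) hu_t hu_x hū_t
    (fun t => by rw [← huper (-1) t]; norm_num) (fun x t => ?_) (fun x t => ?_)
  · simpa only [(hu_t x t).deriv, (hu_x x t).deriv] using hpde x t
  · simpa only [(hū_t x t).deriv] using hpdebar x t

/-- Energy dissipation for the SFD-augmented periodic advection problem: if `u, ū`
are `C¹`, `2`-periodic in `x`, and solve `∂u/∂t + c ∂u/∂x = -χ(x) χ_f (u - ū)`,
`∂ū/∂t = χ(x)(u - ū)/Δ` with `0 ≤ χ ≤ 1` measurable, `χ_f > 0`, `Δ > 0`, then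
`E(t) = ∫_{-1}^{1} [u² + χ_f Δ ū²] dx` is nonincreasing in `t`. -/
theorem sfd_advection_energy_decay (c χf Δ : ℝ) (hχf : 0 < χf) (hΔ : 0 < Δ)
    (χ : ℝ → ℝ) (hχmeas : Measurable χ) (hχ : ∀ x : ℝ, 0 ≤ χ x ∧ χ x ≤ 1)
    (u ubar : ℝ → ℝ → ℝ)
    (hureg : ContDiff ℝ 1 (fun p : ℝ × ℝ => u p.1 p.2))
    (hubarreg : ContDiff ℝ 1 (fun p : ℝ × ℝ => ubar p.1 p.2))
    (huper : ∀ x t : ℝ, u (x + 2) t = u x t)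
    (hubarper : ∀ x t : ℝ, ubar (x + 2) t = ubar x t)
    (hpde : ∀ x t : ℝ,
      deriv (fun t' : ℝ => u x t') t + c * deriv (fun x' : ℝ => u x' t) x
        = -χ x * χf * (u x t - ubar x t))
    (hpdebar : ∀ x t : ℝ,
      deriv (fun t' : ℝ => ubar x t') t = χ x * (u x t - ubar x t) / Δ) :
    Antitone (fun t : ℝ =>
      ∫ x in (-1 : ℝ)..1, ((u x t) ^ 2 + χf * Δ * (ubar x t) ^ 2)) :=
  sfd_advection_energy_decay_general c χf Δ hχf hΔ χ hχ u ubar hureg hubarreg huper hpde hpdebar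
end
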